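/- arXiv:1504.02052 — 5 statements merged into one kernel-verified Lean document; each statement's English description precedes it below -/
import Mathlib

section
/- Any allocation d under which all exchange ratios ρ_i are equal (hence all equal to 1) is lexicographically optimal: there is no allocation d' whose sorted exchange ratio vector is lexicographically strictly larger. -/
open Finset

noncomputable section

variable {V : Type*}

/-- An allocation: nonnegative, supported on edges, each node distributes its full endowment. -/
def IsAlloc [Fintype V] [DecidableEq V] (G : SimpleGraph V) [DecidableRel G.Adj]
    (D : V → ℝ) (d : V → V → ℝ) : Prop :=
  (∀ i j, 0 ≤ d i j) ∧ (∀ i j, ¬ G.Adj i j → d i j = 0) ∧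
  (∀ i, ∑ j ∈ G.neighborFinset i, d i j = D i)

/-- Received resource of node `i`. -/
def recv [Fintype V] [DecidableEq V] (G : SimpleGraph V) [DecidableRel G.Adj]
    (d : V → V → ℝ) (i : V) : ℝ := ∑ j ∈ G.neighborFinset i, d j i

/-- Exchange ratio of node `i`. -/
def ratio [Fintype V] [DecidableEq V] (G : SimpleGraph V) [DecidableRel G.Adj]
    (D : V → ℝ) (d : V → V → ℝ) (i : V) : ℝ := recv G d i / D i

/-- Total resource flowing into `S` from outside. -/
def inFlow [Fintype V] [DecidableEq V] (G : SimpleGraph V) [DecidableRel G.Adj]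
    (d : V → V → ℝ) (S : Finset V) : ℝ :=
  ∑ i ∈ S, ∑ j ∈ G.neighborFinset i \ S, d j i

/-- Total resource flowing out of `S`. -/
def outFlow [Fintype V] [DecidableEq V] (G : SimpleGraph V) [DecidableRel G.Adj]
    (d : V → V → ℝ) (S : Finset V) : ℝ :=
  ∑ i ∈ S, ∑ j ∈ G.neighborFinset i \ S, d i j

/-- Sorted (non-decreasing) list of exchange ratios. -/
def sortedRatios [Fintype V] [DecidableEq V] (G : SimpleGraph V) [DecidableRel G.Adj]
    (D : V → ℝ) (d : V → V → ℝ) : List ℝ :=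
  (Finset.univ.val.map (ratio G D d)).sort (· ≤ ·)

/-- Lexicographic optimality: no allocation gives a lexicographically larger sorted ratio vector. -/
def LexOpt [Fintype V] [DecidableEq V] (G : SimpleGraph V) [DecidableRel G.Adj]
    (D : V → ℝ) (d : V → V → ℝ) : Prop :=
  IsAlloc G D d ∧ ∀ d', IsAlloc G D d' →
    ¬ List.Lex (· < ·) (sortedRatios G D d) (sortedRatios G D d')

/-- Minimum exchange ratio. -/
def minRatio [Fintype V] [Nonempty V] [DecidableEq V] (G : SimpleGraph V) [DecidableRel G.Adj]
    (D : V → ℝ) (d : V → V → ℝ) : ℝ := Finset.univ.inf' Finset.univ_nonempty (ratio G D d)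

/-- Maximum exchange ratio. -/
def maxRatio [Fintype V] [Nonempty V] [DecidableEq V] (G : SimpleGraph V) [DecidableRel G.Adj]
    (D : V → ℝ) (d : V → V → ℝ) : ℝ := Finset.univ.sup' Finset.univ_nonempty (ratio G D d)

/-- The set `L₁` of nodes attaining the minimum exchange ratio. -/
def minSet [Fintype V] [Nonempty V] [DecidableEq V] (G : SimpleGraph V) [DecidableRel G.Adj]
    (D : V → ℝ) (d : V → V → ℝ) : Finset V :=
  Finset.univ.filter (fun i => ratio G D d i = minRatio G D d)

/-- The set `L_K` of nodes attaining the maximum exchange ratio. -/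
def maxSet [Fintype V] [Nonempty V] [DecidableEq V] (G : SimpleGraph V) [DecidableRel G.Adj]
    (D : V → ℝ) (d : V → V → ℝ) : Finset V :=
  Finset.univ.filter (fun i => ratio G D d i = maxRatio G D d)

/-- External neighborhood of a set of nodes. -/
def extNbhd [Fintype V] [DecidableEq V] (G : SimpleGraph V) [DecidableRel G.Adj]
    (S : Finset V) : Finset V := (S.biUnion fun i => G.neighborFinset i) \ S

/-! In every allocation the total amount received equals the total endowment, that is,
`∑ i, D i * ρ i = ∑ i, D i`. With all ratios equal, this forces them all to be `1`. A sorted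
ratio vector lexicographically larger than `(1, …, 1)` has all entries `≥ 1` and one entry `> 1`,
so its weighted sum would exceed `∑ i, D i`. -/

theorem forall_le_and_exists_lt_of_lex_of_forall_eq {α : Type*} [Preorder α] {c : α}
    {l l' : List α} (hlex : List.Lex (· < ·) l l') (hl : ∀ x ∈ l, x = c)
    (hl' : l'.Pairwise (· ≤ ·)) (hlen : l.length = l'.length) :
    (∀ x ∈ l', c ≤ x) ∧ ∃ x ∈ l', c < x := by
  induction hlex with
  | nil => simp at hlen
  | @cons a t t' _ ih =>
    obtain rfl : a = c := hl a List.mem_cons_self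
    obtain ⟨hle, x, hx, hlt⟩ := ih (fun x hx => hl x (List.mem_cons_of_mem _ hx))
      (List.pairwise_cons.1 hl').2 (by simpa using hlen)
    exact ⟨by simpa using hle, x, List.mem_cons_of_mem _ hx, hlt⟩
  | @rel a t b t' hab =>
    obtain rfl : a = c := hl a List.mem_cons_self
    refine ⟨fun x hx => ?_, b, List.mem_cons_self, hab⟩
    rcases List.mem_cons.1 hx with rfl | hx
    · exact hab.le
    · exact hab.le.trans ((List.pairwise_cons.1 hl').1 x hx)

section Allocation

variable [Fintype V] [DecidableEq V] {G : SimpleGraph V} [DecidableRel G.Adj]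
  {D : V → ℝ} {d : V → V → ℝ}

theorem IsAlloc.sum_recv (hd : IsAlloc G D d) : ∑ i, recv G d i = ∑ i, D i := by
  obtain ⟨-, hsupp, hsend⟩ := hd
  have hrecv : ∀ i, recv G d i = ∑ j, d j i := fun i =>
    Finset.sum_subset (Finset.subset_univ _) fun j _ hj =>
      hsupp j i fun hadj => hj (G.mem_neighborFinset i j |>.2 hadj.symm)
  have hsent : ∀ j, ∑ i, d j i = D j := fun j =>
    (Finset.sum_subset (Finset.subset_univ _) fun i _ hi =>
      hsupp j i fun hadj => hi (G.mem_neighborFinset j i |>.2 hadj)).symm.trans (hsend j)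
  simp_rw [hrecv]
  rw [Finset.sum_comm]
  simp_rw [hsent]

theorem IsAlloc.ratio_eq_one_of_forall_ratio_eq (hD : ∀ i, 0 < D i) (hd : IsAlloc G D d)
    (h : ∀ i j, ratio G D d i = ratio G D d j) (i : V) : ratio G D d i = 1 := by
  have hDsum : 0 < ∑ j, D j :=
    Finset.sum_pos (fun j _ => hD j) ⟨i, Finset.mem_univ i⟩
  have hrecv : ∀ j, recv G d j = ratio G D d i * D j := fun j => by
    rw [h i j, ratio, div_mul_cancel₀ _ (hD j).ne']
  have : ratio G D d i * ∑ j, D j = 1 * ∑ j, D j := by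
    rw [Finset.mul_sum, one_mul, ← hd.sum_recv]
    simp_rw [hrecv]
  exact mul_right_cancel₀ hDsum.ne' this

theorem mem_sortedRatios {x : ℝ} : x ∈ sortedRatios G D d ↔ ∃ i, ratio G D d i = x := by
  simp [sortedRatios, Multiset.mem_sort]

theorem length_sortedRatios : (sortedRatios G D d).length = Fintype.card V := by
  simp [sortedRatios, Multiset.length_sort]

theorem forall_le_and_exists_lt_ratio_of_lex_sortedRatios {c : ℝ} {d' : V → V → ℝ}
    (hc : ∀ i, ratio G D d i = c)
    (hlex : List.Lex (· < ·) (sortedRatios G D d) (sortedRatios G D d')) :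
    (∀ i, c ≤ ratio G D d' i) ∧ ∃ j, c < ratio G D d' j := by
  obtain ⟨hle, x, hx, hlt⟩ := forall_le_and_exists_lt_of_lex_of_forall_eq hlex
    (fun x hx => by obtain ⟨i, rfl⟩ := mem_sortedRatios.1 hx; exact hc i)
    (Multiset.pairwise_sort _ _) (by rw [length_sortedRatios, length_sortedRatios])
  obtain ⟨j, rfl⟩ := mem_sortedRatios.1 hx
  exact ⟨fun i => hle _ (mem_sortedRatios.2 ⟨i, rfl⟩), j, hlt⟩

end Allocation

theorem stmt5_general [Fintype V] [DecidableEq V] (G : SimpleGraph V) [DecidableRel G.Adj]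
    (D : V → ℝ) (hD : ∀ i, 0 < D i) (d : V → V → ℝ)
    (hd : IsAlloc G D d) (h : ∀ i j, ratio G D d i = ratio G D d j) :
    LexOpt G D d := by
  refine ⟨hd, fun d' hd' hlex => ?_⟩
  obtain ⟨hle, j, hlt⟩ := forall_le_and_exists_lt_ratio_of_lex_sortedRatios
    (hd.ratio_eq_one_of_forall_ratio_eq hD h) hlex
  have : ∑ i, D i < ∑ i, recv G d' i :=
    Finset.sum_lt_sum (fun i _ => (one_le_div (hD i)).1 (hle i))
      ⟨j, Finset.mem_univ j, (one_lt_div (hD j)).1 hlt⟩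
  exact this.ne hd'.sum_recv.symm

theorem stmt5 [Fintype V] [Nonempty V] [DecidableEq V] (G : SimpleGraph V) [DecidableRel G.Adj]
    (hconn : G.Connected) (D : V → ℝ) (hD : ∀ i, 0 < D i) (d : V → V → ℝ)
    (hd : IsAlloc G D d) (h : ∀ i j, ratio G D d i = ratio G D d j) :
    LexOpt G D d :=
  stmt5_general G D hD d hd h
end
end

section
/- Under a lex-optimal allocation d*, for every node i, all neighbors j of i with d*_ij > 0 have the same exchange ratio ρ*_j, and every neighbor j with d*_ij = 0 has exchange ratio at least that common value. -/
open Finset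

noncomputable section

variable {V : Type*}

section LexOrder

variable {α : Type*} [LinearOrder α]

theorem List.lex_lt_of_count_lt (x : α) : ∀ l₁ l₂ : List α,
    l₁.Pairwise (· ≤ ·) → l₂.Pairwise (· ≤ ·) → l₁.length = l₂.length →
    (∀ y < x, l₁.count y = l₂.count y) → l₂.count x < l₁.count x → List.Lex (· < ·) l₁ l₂
  | [], _, _, _, _, _, hx => by simp at hx
  | _ :: _, [], _, _, hlen, _, _ => by simp at hlen
  | a :: t₁, b :: t₂, h₁, h₂, hlen, hbelow, hx => by
    have le_of_mem : ∀ y ∈ a :: t₁, a ≤ y := fun y hy =>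
      (List.mem_cons.mp hy).elim (fun h => h.ge) (List.rel_of_pairwise_cons h₁)
    have hax : a ≤ x := le_of_mem x (List.count_pos_iff.mp (by omega))
    rcases lt_trichotomy a b with hab | rfl | hba
    · exact List.Lex.rel hab
    · refine List.Lex.cons (List.lex_lt_of_count_lt x t₁ t₂ h₁.of_cons h₂.of_cons
        (by simpa using hlen) (fun y hy => ?_) ?_)
      · have := hbelow y hy
        simp only [List.count_cons] at this
        omega
      · simp only [List.count_cons] at hx
        omega
    · have hb : b ∈ a :: t₁ := by
        rw [← List.count_pos_iff, hbelow b (hba.trans_le hax), List.count_pos_iff]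
        exact List.mem_cons_self
      exact absurd hba (le_of_mem b hb).not_gt

theorem Multiset.lex_sort_lt_of_count_lt {s t : Multiset α} (x : α)
    (hcard : Multiset.card s = Multiset.card t) (hbelow : ∀ y < x, s.count y = t.count y)
    (hx : t.count x < s.count x) : List.Lex (· < ·) (s.sort (· ≤ ·)) (t.sort (· ≤ ·)) := by
  have hcount : ∀ (u : Multiset α) y, (u.sort (· ≤ ·)).count y = u.count y := fun u y => by
    rw [← Multiset.coe_count, Multiset.sort_eq]
  refine List.lex_lt_of_count_lt x _ _ (Multiset.pairwise_sort _ _) (Multiset.pairwise_sort _ _)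
    (by simpa using hcard) (fun y hy => ?_) ?_
  · rw [hcount, hcount, hbelow y hy]
  · rwa [hcount, hcount]

theorem Finset.lex_sort_map_lt_of_raise {ι : Type*} (s : Finset ι) (f g : ι → α) {k : ι}
    (hk : k ∈ s) (hgk : f k < g k) (hraise : ∀ m ∈ s, f m ≠ g m → f k < g m ∧ f k ≤ f m) :
    List.Lex (· < ·) ((s.val.map f).sort (· ≤ ·)) ((s.val.map g).sort (· ≤ ·)) := by
  classical
  have hcount : ∀ (h : ι → α) y, (s.val.map h).count y = #(s.filter (y = h ·)) := fun h y =>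
    Multiset.count_map h s.val y
  refine Multiset.lex_sort_lt_of_count_lt (f k) (by simp) (fun y hy => ?_) ?_
  · rw [hcount, hcount]
    congr 1
    refine Finset.filter_congr fun m hm => ?_
    by_cases hfg : f m = g m
    · rw [hfg]
    · have := hraise m hm hfg
      constructor <;> rintro rfl <;> order
  · rw [hcount, hcount]
    refine Finset.card_lt_card (Finset.ssubset_iff_of_subset (fun m hm => ?_) |>.mpr
      ⟨k, by simp [hk], by simp [hgk.ne]⟩)
    simp only [Finset.mem_filter] at hm ⊢
    refine ⟨hm.1, ?_⟩
    by_contra hfg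
    have := hraise m hm.1 fun h => hfg (hm.2.trans h.symm)
    order

end LexOrder

section Shift

variable [Fintype V] [DecidableEq V] {G : SimpleGraph V} [DecidableRel G.Adj]
  {D : V → ℝ} {d : V → V → ℝ} {i j k : V} {ε : ℝ}

def shift (d : V → V → ℝ) (i j k : V) (ε : ℝ) : V → V → ℝ := fun a b =>
  d a b + (if a = i ∧ b = k then ε else 0) - (if a = i ∧ b = j then ε else 0)

theorem IsAlloc.shift (hd : IsAlloc G D d) (hij : G.Adj i j) (hik : G.Adj i k) (hε : 0 ≤ ε)
    (hεd : ε ≤ d i j) : IsAlloc G D (shift d i j k ε) := by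
  obtain ⟨hnonneg, hsupp, hsum⟩ := hd
  refine ⟨fun a b => ?_, fun a b hab => ?_, fun a => ?_⟩
  · have hadd : 0 ≤ if a = i ∧ b = k then ε else 0 := by split_ifs <;> simp [hε]
    have hsub : (if a = i ∧ b = j then ε else 0) ≤ d a b := by
      split_ifs with h
      · obtain ⟨rfl, rfl⟩ := h
        exact hεd
      · exact hnonneg a b
    unfold _root_.shift
    linarith
  · have hk : ¬(a = i ∧ b = k) := by rintro ⟨rfl, rfl⟩; exact hab hik
    have hj : ¬(a = i ∧ b = j) := by rintro ⟨rfl, rfl⟩; exact hab hij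
    simp [_root_.shift, hk, hj, hsupp a b hab]
  · have hj : j ∈ G.neighborFinset i := by simpa using hij
    have hk : k ∈ G.neighborFinset i := by simpa using hik
    by_cases ha : a = i
    · subst ha
      simp [_root_.shift, Finset.sum_add_distrib, Finset.sum_sub_distrib, hsum, hj, hk]
    · simp [_root_.shift, ha, hsum]

theorem recv_shift (hij : G.Adj i j) (hik : G.Adj i k) (m : V) :
    recv G (shift d i j k ε) m = recv G d m + (if m = k then ε else 0) - (if m = j then ε else 0) := by
  have hi : ∀ l, G.Adj i l → i ∈ G.neighborFinset l := fun l h => by simpa using h.symm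
  unfold recv _root_.shift
  rw [Finset.sum_sub_distrib, Finset.sum_add_distrib]
  congr 2
  · by_cases hm : m = k
    · subst hm; simp [hi _ hik]
    · simp [hm]
  · by_cases hm : m = j
    · subst hm; simp [hi _ hij]
    · simp [hm]

end Shift

/-- Otherwise redirecting a little of `i`'s flow from `j` to `k` raises the ratio of `k` without
pushing that of `j` down to its old value, a lexicographic improvement. -/
theorem LexOpt.ratio_le [Fintype V] [DecidableEq V] {G : SimpleGraph V} [DecidableRel G.Adj]
    {D : V → ℝ} (hD : ∀ i, 0 < D i) {d : V → V → ℝ} (hopt : LexOpt G D d) {i j k : V}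
    (hij : G.Adj i j) (hik : G.Adj i k) (hdij : 0 < d i j) : ratio G D d j ≤ ratio G D d k := by
  by_contra! hlt
  set ε := min (d i j) ((ratio G D d j - ratio G D d k) * D j / 2)
  have hjk : j ≠ k := fun h => hlt.ne (h ▸ rfl)
  have hgap := sub_pos.mpr hlt
  have hε : 0 < ε := lt_min hdij (by have := hD j; positivity)
  have hεj : ε / D j < ratio G D d j - ratio G D d k := by
    rw [div_lt_iff₀ (hD j)]
    have := mul_pos hgap (hD j)
    linarith [min_le_right (d i j) ((ratio G D d j - ratio G D d k) * D j / 2)]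
  have hρ' : ∀ m, ratio G D (shift d i j k ε) m = ratio G D d m
      + ((if m = k then ε else 0) - (if m = j then ε else 0)) / D m := fun m => by
    simp only [ratio, recv_shift hij hik]
    ring
  refine hopt.2 _ (hopt.1.shift hij hik hε.le (min_le_left _ _)) ?_
  refine Finset.lex_sort_map_lt_of_raise _ _ _ (Finset.mem_univ k)
    (by simp [hρ', hjk.symm, div_pos hε (hD k)]) fun m _ hm => ?_
  by_cases hmk : m = k
  · subst hmk
    simp [hρ', hjk.symm, div_pos hε (hD m)]
  by_cases hmj : m = j
  · subst hmj
    simp only [hρ', hjk, if_true, if_false, zero_sub, neg_div]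
    constructor <;> linarith
  · simp [hρ', hmk, hmj] at hm

theorem stmt6_general [Fintype V] [DecidableEq V] (G : SimpleGraph V) [DecidableRel G.Adj]
    (D : V → ℝ) (hD : ∀ i, 0 < D i) (d : V → V → ℝ)
    (hopt : LexOpt G D d) :
    (∀ i j k, G.Adj i j → G.Adj i k → 0 < d i j → 0 < d i k →
      ratio G D d j = ratio G D d k) ∧
    (∀ i j k, G.Adj i j → G.Adj i k → 0 < d i j → d i k = 0 →
      ratio G D d j ≤ ratio G D d k) :=
  ⟨fun _ _ _ hij hik hdij hdik =>
      (hopt.ratio_le hD hij hik hdij).antisymm (hopt.ratio_le hD hik hij hdik),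
    fun _ _ _ hij hik hdij _ => hopt.ratio_le hD hij hik hdij⟩

theorem stmt6 [Fintype V] [Nonempty V] [DecidableEq V] (G : SimpleGraph V) [DecidableRel G.Adj]
    (hconn : G.Connected) (D : V → ℝ) (hD : ∀ i, 0 < D i) (d : V → V → ℝ)
    (hopt : LexOpt G D d) :
    (∀ i j k, G.Adj i j → G.Adj i k → 0 < d i j → 0 < d i k →
      ratio G D d j = ratio G D d k) ∧
    (∀ i j k, G.Adj i j → G.Adj i k → 0 < d i j → d i k = 0 →
      ratio G D d j ≤ ratio G D d k) :=
  stmt6_general G D hD d hopt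
end
end

section
/- Under a lex-optimal allocation with at least two distinct exchange ratio levels, every node in the highest level set L_K (nodes with maximum exchange ratio l_K) allocates all of its resource to nodes outside L_K; i.e., Out(L_K) = ∑_{i∈L_K} D_i. -/
/-!
In a lex-optimal allocation flow only goes to the poorest neighbours: if `x` sends to `w` and `u`
is another neighbour of `x`, then `ρ w ≤ ρ u`, for otherwise moving a little of `x`'s flow from `w`
to `u` raises the sorted ratio vector lexicographically. Hence the nodes of `L_K` that send into
`L_K` form a set closed under incoming flow, so together they receive at most what they own. Since
total receipts equal total endowments, the `D`-weighted mean of the ratios is `1`, so with two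
distinct levels `l_K > 1` and every node of that set receives strictly more than it owns: the set
is empty.
-/

open Finset

noncomputable section

variable {V : Type*}

theorem List.lex_lt_of_count_lt_s8 {α : Type*} [LinearOrder α] {v : α} {L L' : List α}
    (hL : L.Pairwise (· ≤ ·)) (hL' : L'.Pairwise (· ≤ ·)) (hlen : L.length = L'.length)
    (hbelow : ∀ t < v, L.count t = L'.count t) (hv : L'.count v < L.count v) :
    List.Lex (· < ·) L L' := by
  induction L generalizing L' with
  | nil => simp at hv
  | cons x xs ih =>
    cases L' with
    | nil => simp at hlen
    | cons y ys =>
      have hxv : x ≤ v := by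
        have hvL : v ∈ x :: xs := List.count_pos_iff.mp ((Nat.zero_le _).trans_lt hv)
        rcases List.mem_cons.mp hvL with rfl | hmem
        · exact le_rfl
        · exact List.rel_of_pairwise_cons hL hmem
      rcases lt_trichotomy x y with hxy | rfl | hyx
      · exact .rel hxy
      · refine .cons (ih hL.of_cons hL'.of_cons (by simpa using hlen) (fun t ht => ?_) ?_)
        · simpa [List.count_cons] using hbelow t ht
        · simpa [List.count_cons] using hv
      · have hy : (x :: xs).count y = 0 := List.count_eq_zero.mpr fun hmem => by
          rcases List.mem_cons.mp hmem with rfl | hmem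
          · exact lt_irrefl _ hyx
          · exact (List.rel_of_pairwise_cons hL hmem).not_gt hyx
        have := hbelow y (hyx.trans_le hxv)
        simp [hy] at this

theorem count_map_univ_val {ι α : Type*} [Fintype ι] [DecidableEq α] (f : ι → α) (t : α) :
    (univ.val.map f).count t = #{i | f i = t} := by
  rw [Multiset.count_map, ← Finset.filter_val, Finset.card_val]
  simp only [eq_comm]

theorem lex_sort_map_lt_of_raise {ι α : Type*} [Fintype ι] [LinearOrder α] {f g : ι → α} {u w : ι}
    (hfw : f u < f w) (hgu : f u < g u) (hgw : f u < g w)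
    (hg : ∀ i, i ≠ u → i ≠ w → g i = f i) :
    List.Lex (· < ·) ((univ.val.map f).sort (· ≤ ·)) ((univ.val.map g).sort (· ≤ ·)) := by
  have hcount : ∀ (h : ι → α) t, ((univ.val.map h).sort (· ≤ ·)).count t = #{i | h i = t} :=
    fun h t => by rw [← Multiset.coe_count, Multiset.sort_eq, count_map_univ_val]
  refine List.lex_lt_of_count_lt_s8 (v := f u)
    (Multiset.pairwise_sort _ _) (Multiset.pairwise_sort _ _)
    (by simp only [Multiset.length_sort, Multiset.card_map]) (fun t ht => ?_) ?_
  · rw [hcount, hcount]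
    congr 1
    refine filter_congr fun i _ => ?_
    by_cases hiu : i = u
    · subst hiu; simp [ht.ne', (ht.trans hgu).ne']
    by_cases hiw : i = w
    · subst hiw; simp [(ht.trans hfw).ne', (ht.trans hgw).ne']
    rw [hg i hiu hiw]
  · rw [hcount, hcount]
    refine card_lt_card ((ssubset_iff_of_subset fun i hi => ?_).mpr ⟨u, by simp, by simp [hgu.ne']⟩)
    simp only [mem_filter, mem_univ, true_and] at hi ⊢
    have hiu : i ≠ u := by rintro rfl; exact hgu.ne' hi
    have hiw : i ≠ w := by rintro rfl; exact hgw.ne' hi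
    rwa [← hg i hiu hiw]

namespace IsAlloc

variable [Fintype V] [DecidableEq V] {G : SimpleGraph V} [DecidableRel G.Adj]
  {D : V → ℝ} {d : V → V → ℝ}

theorem adj_of_pos {i j : V} (hd : IsAlloc G D d) (hij : 0 < d i j) : G.Adj i j :=
  by_contra fun h => hij.ne' (hd.2.1 i j h)

theorem sum_eq (hd : IsAlloc G D d) (i : V) : ∑ j, d i j = D i := by
  rw [← hd.2.2 i]
  exact (sum_subset (subset_univ _) fun j _ hj => hd.2.1 i j (by simpa using hj)).symm

theorem recv_eq (hd : IsAlloc G D d) (i : V) : recv G d i = ∑ j, d j i :=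
  sum_subset (subset_univ _) fun j _ hj => hd.2.1 j i fun h => hj (by simpa using h.symm)

theorem sum_recv_s8 (hd : IsAlloc G D d) : ∑ i, recv G d i = ∑ i, D i := by
  simp only [hd.recv_eq]
  rw [sum_comm]
  exact sum_congr rfl fun i _ => hd.sum_eq i

theorem sum_neighborFinset_sdiff_eq {S : Finset V} {i : V} (hd : IsAlloc G D d)
    (hS : ∀ j ∈ S, d i j = 0) : ∑ j ∈ G.neighborFinset i \ S, d i j = D i := by
  rw [← hd.2.2 i]
  exact sum_subset sdiff_subset fun j hj hjS => hS j (by simp_all)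

theorem sum_recv_le_of_closed {T : Finset V} (hd : IsAlloc G D d)
    (hT : ∀ v ∈ T, ∀ p, 0 < d p v → p ∈ T) : ∑ v ∈ T, recv G d v ≤ ∑ v ∈ T, D v := by
  have hfrom_T : ∀ v ∈ T, recv G d v = ∑ p ∈ T, d p v := fun v hv => by
    rw [hd.recv_eq]
    exact (sum_subset (subset_univ T) fun p _ hp =>
      ((hd.1 p v).eq_or_lt.resolve_right fun h => hp (hT v hv p h)).symm).symm
  calc ∑ v ∈ T, recv G d v = ∑ p ∈ T, ∑ v ∈ T, d p v := by
        rw [sum_congr rfl hfrom_T, sum_comm]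
    _ ≤ ∑ p ∈ T, ∑ v, d p v :=
        sum_le_sum fun p _ => sum_le_sum_of_subset_of_nonneg (subset_univ T) fun v _ _ => hd.1 p v
    _ = ∑ p ∈ T, D p := sum_congr rfl fun p _ => hd.sum_eq p

theorem eq_empty_of_closed {T : Finset V} (hd : IsAlloc G D d)
    (hT : ∀ v ∈ T, ∀ p, 0 < d p v → p ∈ T) (hgain : ∀ v ∈ T, D v < recv G d v) : T = ∅ := by
  by_contra hne
  exact (hd.sum_recv_le_of_closed hT).not_gt
    (sum_lt_sum_of_nonempty (nonempty_iff_ne_empty.mpr hne) hgain)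

end IsAlloc

section ratios

variable [Fintype V] [DecidableEq V] {G : SimpleGraph V} [DecidableRel G.Adj]
  {D : V → ℝ} {d : V → V → ℝ}

theorem ratio_mul_eq_recv (hD : ∀ i, 0 < D i) (i : V) : ratio G D d i * D i = recv G d i :=
  div_mul_cancel₀ _ (hD i).ne'

theorem one_lt_maxRatio [Nonempty V] (hd : IsAlloc G D d) (hD : ∀ i, 0 < D i)
    (hK : ∃ i j, ratio G D d i ≠ ratio G D d j) : 1 < maxRatio G D d := by
  have hle : ∀ i, ratio G D d i ≤ maxRatio G D d := fun i => le_sup' _ (mem_univ i)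
  obtain ⟨i, j, hij⟩ := hK
  obtain ⟨k, hk⟩ : ∃ k, ratio G D d k < maxRatio G D d := by
    by_contra! h
    exact hij (by rw [(hle i).antisymm (h i), (hle j).antisymm (h j)])
  have hlt : ∑ i, D i < maxRatio G D d * ∑ i, D i :=
    calc ∑ i, D i = ∑ i, ratio G D d i * D i := by
          simp only [ratio_mul_eq_recv hD, hd.sum_recv_s8]
      _ < ∑ i, maxRatio G D d * D i :=
          sum_lt_sum (fun i _ => mul_le_mul_of_nonneg_right (hle i) (hD i).le)
            ⟨k, mem_univ k, mul_lt_mul_of_pos_right hk (hD k)⟩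
      _ = maxRatio G D d * ∑ i, D i := (mul_sum _ _ _).symm
  exact (lt_mul_iff_one_lt_left (sum_pos (fun i _ => hD i) univ_nonempty)).mp hlt

end ratios

section reroute

variable [Fintype V] [DecidableEq V] {G : SimpleGraph V} [DecidableRel G.Adj]
  {D : V → ℝ} {d : V → V → ℝ} {x w u : V} {ε : ℝ}

def reroute (d : V → V → ℝ) (x w u : V) (ε : ℝ) : V → V → ℝ :=
  fun i j => d i j + if i = x then (Pi.single u ε - Pi.single w ε : V → ℝ) j else 0

theorem IsAlloc.reroute (hd : IsAlloc G D d) (hxw : G.Adj x w) (hxu : G.Adj x u)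
    (hε : 0 ≤ ε) (hεd : ε ≤ d x w) : IsAlloc G D (reroute d x w u ε) := by
  refine ⟨fun i j => ?_, fun i j hij => ?_, fun i => ?_⟩
  · have := hd.1 i j
    simp only [_root_.reroute, Pi.sub_apply, Pi.single_apply]
    split_ifs <;> subst_vars <;> linarith
  · simp only [_root_.reroute, hd.2.1 i j hij, Pi.sub_apply, Pi.single_apply]
    split_ifs <;> simp_all
  · simp only [_root_.reroute, sum_add_distrib, hd.2.2 i]
    split_ifs with hi
    · subst hi
      simp [sum_sub_distrib, sum_pi_single', hxu, hxw]
    · simp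

theorem recv_reroute (hxw : G.Adj x w) (hxu : G.Adj x u) (v : V) :
    recv G (reroute d x w u ε) v = recv G d v + (Pi.single u ε - Pi.single w ε : V → ℝ) v := by
  simp only [recv, _root_.reroute, sum_add_distrib, sum_ite_eq']
  split_ifs with hx
  · rfl
  · have hvu : v ≠ u := by rintro rfl; exact hx (by simpa using hxu.symm)
    have hvw : v ≠ w := by rintro rfl; exact hx (by simpa using hxw.symm)
    simp [hvu, hvw]

theorem ratio_reroute (hxw : G.Adj x w) (hxu : G.Adj x u) (v : V) :
    ratio G D (reroute d x w u ε) v =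
      ratio G D d v + (Pi.single u ε - Pi.single w ε : V → ℝ) v / D v := by
  rw [ratio, ratio, recv_reroute hxw hxu, add_div]

end reroute

theorem LexOpt.ratio_le_of_pos [Fintype V] [DecidableEq V] {G : SimpleGraph V} [DecidableRel G.Adj]
    {D : V → ℝ} {d : V → V → ℝ} (hopt : LexOpt G D d) (hD : ∀ i, 0 < D i) {x w u : V}
    (hxw : 0 < d x w) (hxu : G.Adj x u) : ratio G D d w ≤ ratio G D d u := by
  by_contra! hlt
  have hadj : G.Adj x w := hopt.1.adj_of_pos hxw
  have hwu : w ≠ u := ne_of_apply_ne (ratio G D d) hlt.ne'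
  set gap := ratio G D d w - ratio G D d u
  have hgap : 0 < gap := sub_pos.mpr hlt
  set ε := min (d x w) (gap * D w / 2)
  have hε : 0 < ε := lt_min hxw (by have := hD w; positivity)
  have hεw : ε / D w < gap := by
    rw [div_lt_iff₀ (hD w)]
    nlinarith [min_le_right (d x w) (gap * D w / 2), hD w]
  refine hopt.2 _ (hopt.1.reroute hadj hxu hε.le (min_le_left _ _))
    (lex_sort_map_lt_of_raise hlt ?_ ?_ fun i hiu hiw => ?_) <;> rw [ratio_reroute hadj hxu]
  · rw [Pi.sub_apply, Pi.single_eq_same, Pi.single_eq_of_ne hwu.symm, sub_zero]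
    exact lt_add_of_pos_right _ (div_pos hε (hD u))
  · rw [Pi.sub_apply, Pi.single_eq_of_ne hwu, Pi.single_eq_same, zero_sub, neg_div]
    linarith
  · simp [hiu, hiw]

theorem LexOpt.eq_zero_of_mem_maxSet [Fintype V] [Nonempty V] [DecidableEq V] {G : SimpleGraph V}
    [DecidableRel G.Adj] {D : V → ℝ} {d : V → V → ℝ} (hopt : LexOpt G D d) (hD : ∀ i, 0 < D i)
    (hM : 1 < maxRatio G D d) {i j : V} (hi : i ∈ maxSet G D d) (hj : j ∈ maxSet G D d) :
    d i j = 0 := by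
  set S := maxSet G D d
  have hmem : ∀ v, v ∈ S ↔ ratio G D d v = maxRatio G D d := by simp [S, maxSet]
  have hle : ∀ v, ratio G D d v ≤ maxRatio G D d := fun v => le_sup' _ (mem_univ v)
  set T := S.filter fun v => ∃ w ∈ S, 0 < d v w
  have hclosed : ∀ v ∈ T, ∀ p, 0 < d p v → p ∈ T := by
    intro v hv p hpv
    obtain ⟨hvS, w, hwS, hvw⟩ := mem_filter.mp hv
    have hwp := hopt.ratio_le_of_pos hD hvw (hopt.1.adj_of_pos hpv).symm
    rw [(hmem w).1 hwS] at hwp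
    exact mem_filter.mpr ⟨(hmem p).2 ((hle p).antisymm hwp), v, hvS, hpv⟩
  have hgain : ∀ v ∈ T, D v < recv G d v := fun v hv => by
    rw [← ratio_mul_eq_recv hD, (hmem v).1 (filter_subset _ _ hv)]
    exact lt_mul_of_one_lt_left (hD v) hM
  have hT : T = ∅ := hopt.1.eq_empty_of_closed hclosed hgain
  by_contra hne
  have hiT : i ∈ T := mem_filter.mpr ⟨hi, j, hj, (hopt.1.1 i j).lt_of_ne' hne⟩
  simp [hT] at hiT

theorem stmt8_general [Fintype V] [Nonempty V] [DecidableEq V] (G : SimpleGraph V) [DecidableRel G.Adj]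
    (D : V → ℝ) (hD : ∀ i, 0 < D i) (d : V → V → ℝ)
    (hopt : LexOpt G D d) (hK : ∃ i j, ratio G D d i ≠ ratio G D d j) :
    outFlow G d (maxSet G D d) = ∑ i ∈ maxSet G D d, D i := by
  have hM := one_lt_maxRatio hopt.1 hD hK
  exact sum_congr rfl fun i hi =>
    hopt.1.sum_neighborFinset_sdiff_eq fun j hj => hopt.eq_zero_of_mem_maxSet hD hM hi hj

theorem stmt8 [Fintype V] [Nonempty V] [DecidableEq V] (G : SimpleGraph V) [DecidableRel G.Adj]
    (hconn : G.Connected) (D : V → ℝ) (hD : ∀ i, 0 < D i) (d : V → V → ℝ)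
    (hopt : LexOpt G D d) (hK : ∃ i j, ratio G D d i ≠ ratio G D d j) :
    outFlow G d (maxSet G D d) = ∑ i ∈ maxSet G D d, D i :=
  stmt8_general G D hD d hopt hK
end
end

section
/- Suppose an allocation d̄ has at least two distinct exchange ratio levels, its minimum-ratio set L̄_1 is an independent set, and ∑_{i∈L̄_1} r̄_i = ∑_{i∈N(L̄_1)} D_i. Then any allocation d̂ maximizing min_j r_j/D_j satisfies L̄_1 ⊆ L̂_1 and achieves the same minimum ratio: min_j r̂_j/D_j = min_j r̄_j/D_j. -/
open Finset

noncomputable section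

variable {V : Type*}

/-!
Because `L̄₁` is independent, everything a node of `L̄₁` receives comes from `N(L̄₁)`, so under
any allocation `∑_{i ∈ L̄₁} r_i ≤ ∑_{j ∈ N(L̄₁)} D_j`, and the hypothesis says `d̄` attains this
bound. A max-min allocation `d̂` has every ratio at least `m̄ = min_j r̄_j / D_j`, hence
`∑_{i ∈ L̄₁} r̂_i ≥ m̄ ∑_{i ∈ L̄₁} D_i = ∑_{i ∈ L̄₁} r̄_i`, which is the bound again. So all these
inequalities are equalities: `r̂_i / D_i = m̄` on `L̄₁`, and the minimum ratio of `d̂` is `m̄`.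
-/

section Allocation

variable [Fintype V] [DecidableEq V] {G : SimpleGraph V} [DecidableRel G.Adj]
  {D : V → ℝ} {d : V → V → ℝ}

theorem IsAlloc.sum_le_endowment (hd : IsAlloc G D d) (j : V) (S : Finset V) :
    ∑ i ∈ S, d j i ≤ D j := by
  obtain ⟨hnonneg, hsupp, hdist⟩ := hd
  have hsupport : ∑ i ∈ G.neighborFinset j, d j i = ∑ i, d j i :=
    sum_subset (subset_univ _) fun i _ hi =>
      hsupp j i fun h => hi ((G.mem_neighborFinset j i).mpr h)
  calc ∑ i ∈ S, d j i ≤ ∑ i, d j i :=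
        sum_le_sum_of_subset_of_nonneg (subset_univ S) fun i _ _ => hnonneg j i
    _ = D j := by rw [← hsupport, hdist j]

theorem IsAlloc.sum_recv_le (hd : IsAlloc G D d) {S T : Finset V}
    (hST : ∀ i ∈ S, G.neighborFinset i ⊆ T) :
    ∑ i ∈ S, recv G d i ≤ ∑ j ∈ T, D j :=
  calc ∑ i ∈ S, recv G d i ≤ ∑ i ∈ S, ∑ j ∈ T, d j i :=
        sum_le_sum fun i hi =>
          sum_le_sum_of_subset_of_nonneg (hST i hi) fun j _ _ => hd.1 j i
    _ = ∑ j ∈ T, ∑ i ∈ S, d j i := sum_comm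
    _ ≤ ∑ j ∈ T, D j := sum_le_sum fun j _ => hd.sum_le_endowment j S

theorem neighborFinset_subset_extNbhd {S : Finset V}
    (hS : ∀ i ∈ S, ∀ j ∈ S, ¬ G.Adj i j) {i : V} (hi : i ∈ S) :
    G.neighborFinset i ⊆ extNbhd G S := by
  intro j hj
  rw [SimpleGraph.mem_neighborFinset] at hj
  exact mem_sdiff.mpr
    ⟨mem_biUnion.mpr ⟨i, hi, (G.mem_neighborFinset i j).mpr hj⟩, fun hjS => hS i hi j hjS hj⟩

theorem recv_eq_ratio_mul {i : V} (hDi : D i ≠ 0) :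
    recv G d i = ratio G D d i * D i :=
  (div_mul_cancel₀ _ hDi).symm

theorem ratio_eq_of_sum_recv_le {S : Finset V} (hD : ∀ i ∈ S, 0 < D i) {m : ℝ}
    (hle : ∀ i ∈ S, m ≤ ratio G D d i) (hsum : ∑ i ∈ S, recv G d i ≤ ∑ i ∈ S, m * D i) :
    ∀ i ∈ S, ratio G D d i = m := by
  have hterm : ∀ i ∈ S, m * D i ≤ recv G d i := fun i hi => by
    rw [recv_eq_ratio_mul (hD i hi).ne']
    exact mul_le_mul_of_nonneg_right (hle i hi) (hD i hi).le
  have hterm_eq := (sum_eq_sum_iff_of_le hterm).mp (le_antisymm (sum_le_sum hterm) hsum)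
  intro i hi
  have h := hterm_eq i hi
  rw [recv_eq_ratio_mul (hD i hi).ne'] at h
  exact (mul_right_cancel₀ (hD i hi).ne' h).symm

variable [Nonempty V]

theorem minRatio_le_ratio (i : V) : minRatio G D d ≤ ratio G D d i :=
  inf'_le _ (mem_univ i)

theorem mem_minSet {i : V} : i ∈ minSet G D d ↔ ratio G D d i = minRatio G D d := by
  simp [minSet]

theorem minSet_nonempty : (minSet G D d).Nonempty := by
  obtain ⟨i, -, hi⟩ := exists_mem_eq_inf' univ_nonempty (ratio G D d)
  exact ⟨i, mem_minSet.mpr hi.symm⟩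

theorem recv_eq_minRatio_mul {i : V} (hDi : D i ≠ 0) (hi : i ∈ minSet G D d) :
    recv G d i = minRatio G D d * D i := by
  rw [recv_eq_ratio_mul hDi, mem_minSet.mp hi]

end Allocation

theorem stmt13_general [Fintype V] [Nonempty V] [DecidableEq V] (G : SimpleGraph V) [DecidableRel G.Adj]
    (D : V → ℝ) (hD : ∀ i, 0 < D i)
    (dbar : V → V → ℝ) (hbar : IsAlloc G D dbar)
    (hind : ∀ i ∈ minSet G D dbar, ∀ j ∈ minSet G D dbar, ¬ G.Adj i j)
    (hsum : ∑ i ∈ minSet G D dbar, recv G dbar i = ∑ i ∈ extNbhd G (minSet G D dbar), D i)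
    (dhat : V → V → ℝ) (hhat : IsAlloc G D dhat)
    (hmax : ∀ d', IsAlloc G D d' → minRatio G D d' ≤ minRatio G D dhat) :
    minSet G D dbar ⊆ minSet G D dhat ∧ minRatio G D dhat = minRatio G D dbar := by
  set L := minSet G D dbar
  set m := minRatio G D dbar
  have hcap : ∑ i ∈ L, recv G dhat i ≤ ∑ i ∈ L, m * D i :=
    calc ∑ i ∈ L, recv G dhat i ≤ ∑ j ∈ extNbhd G L, D j :=
          hhat.sum_recv_le fun i hi => neighborFinset_subset_extNbhd hind hi
      _ = ∑ i ∈ L, recv G dbar i := hsum.symm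
      _ = ∑ i ∈ L, m * D i := sum_congr rfl fun i hi => recv_eq_minRatio_mul (hD i).ne' hi
  have hlow : ∀ i, m ≤ ratio G D dhat i := fun i =>
    (hmax dbar hbar).trans (minRatio_le_ratio i)
  have hratio : ∀ i ∈ L, ratio G D dhat i = m :=
    ratio_eq_of_sum_recv_le (fun i _ => hD i) (fun i _ => hlow i) hcap
  obtain ⟨i₀, hi₀⟩ := minSet_nonempty (G := G) (D := D) (d := dbar)
  have hmin : minRatio G D dhat = m :=
    le_antisymm ((minRatio_le_ratio i₀).trans (hratio i₀ hi₀).le) (hmax dbar hbar)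
  exact ⟨fun i hi => mem_minSet.mpr (by rw [hratio i hi, hmin]), hmin⟩

theorem stmt13 [Fintype V] [Nonempty V] [DecidableEq V] (G : SimpleGraph V) [DecidableRel G.Adj]
    (hconn : G.Connected) (D : V → ℝ) (hD : ∀ i, 0 < D i)
    (dbar : V → V → ℝ) (hbar : IsAlloc G D dbar)
    (hK : ∃ i j, ratio G D dbar i ≠ ratio G D dbar j)
    (hind : ∀ i ∈ minSet G D dbar, ∀ j ∈ minSet G D dbar, ¬ G.Adj i j)
    (hsum : ∑ i ∈ minSet G D dbar, recv G dbar i = ∑ i ∈ extNbhd G (minSet G D dbar), D i)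
    (dhat : V → V → ℝ) (hhat : IsAlloc G D dhat)
    (hmax : ∀ d', IsAlloc G D d' → minRatio G D d' ≤ minRatio G D dhat) :
    minSet G D dbar ⊆ minSet G D dhat ∧ minRatio G D dhat = minRatio G D dbar :=
  stmt13_general G D hD dbar hbar hind hsum dhat hhat hmax
end
end

section
/- In a complete graph, any lex-optimal allocation has at most two distinct exchange ratio levels; moreover, if there are exactly two levels, the minimum-ratio level set is a singleton. -/
open Finset

noncomputable section

variable {V : Type*}

/-! If `ρ i < ρ j`, a lex-optimal allocation has no node `k ∉ {i, j}` adjacent to `i` that gives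
to `j`: moving a little of that gift from `j` to `i` lifts `ρ i` without pushing `ρ j` below it,
which raises the sorted ratio vector. In a complete graph a node `j` above the minimum ratio has
`ρ j > 0`, hence a donor `k`, and `k` is adjacent to every node; so every node of ratio below `ρ j`
is `k`. For `j` of maximal ratio this leaves at most one level below the top, and for `j` outside
the minimum level it makes that level a singleton. -/

namespace Multiset

variable {α : Type*} [LinearOrder α]

theorem lex_sort_cons_of_lt {a : α} {s t : Multiset α} (hs : ∀ y ∈ s, a ≤ y)
    (ht : ∀ y ∈ t, a < y) (ht0 : t ≠ 0) : List.Lex (· < ·) (sort (a ::ₘ s)) (sort t) := by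
  rw [sort_cons _ _ _ hs]
  obtain ⟨h, l, hl⟩ := List.exists_cons_of_ne_nil (l := sort t)
    fun h => ht0 (by rw [← sort_eq t (· ≤ ·), h]; rfl)
  rw [hl]
  exact List.Lex.rel (ht h (by rw [← mem_sort (r := (· ≤ ·)), hl]; exact List.mem_cons_self ..))

theorem lex_sort_cons_cons_coe_of_lt {a b a' b' : α} (haa' : a < a') (hab : a < b)
    (hab' : a < b') (l : List α) (hl : l.Pairwise (· ≤ ·)) :
    List.Lex (· < ·) (sort (a ::ₘ b ::ₘ l)) (sort (a' ::ₘ b' ::ₘ l)) := by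
  induction l with
  | nil =>
    refine lex_sort_cons_of_lt (by simpa using hab.le) ?_ (by simp)
    simpa using ⟨haa', hab'⟩
  | cons c l ih =>
    obtain ⟨hc, hl⟩ := List.pairwise_cons.1 hl
    by_cases hca : c ≤ a
    · have hcs : ∀ y ∈ (a ::ₘ b ::ₘ l : Multiset α), c ≤ y := by
        simpa [hca, hca.trans hab.le] using hc
      have hcs' : ∀ y ∈ (a' ::ₘ b' ::ₘ l : Multiset α), c ≤ y := by
        simpa [hca.trans haa'.le, hca.trans hab'.le] using hc
      rw [← cons_coe, cons_swap b, cons_swap a, cons_swap b', cons_swap a',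
        sort_cons _ _ _ hcs, sort_cons _ _ _ hcs']
      exact List.Lex.cons (ih hl)
    · push Not at hca
      refine lex_sort_cons_of_lt ?_ ?_ (by simp)
      · simpa [hab.le, hca.le] using fun y hy => hca.le.trans (hc y hy)
      · simpa [haa', hab', hca] using fun y hy => hca.trans_le (hc y hy)

theorem lex_sort_cons_cons_of_lt {a b a' b' : α} (haa' : a < a') (hab : a < b) (hab' : a < b')
    (s : Multiset α) :
    List.Lex (· < ·) (sort (a ::ₘ b ::ₘ s)) (sort (a' ::ₘ b' ::ₘ s)) := by
  have h := lex_sort_cons_cons_coe_of_lt haa' hab hab' (sort s) (pairwise_sort s _)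
  rwa [sort_eq] at h

end Multiset

theorem lex_sort_map_univ_of_lt {α : Type*} [LinearOrder α] [Fintype V] [DecidableEq V]
    {f f' : V → α} {i j : V} (hij : i ≠ j) (hoff : ∀ m, m ≠ i → m ≠ j → f' m = f m)
    (hi : f i < f' i) (hj : f i < f j) (hj' : f i < f' j) :
    List.Lex (· < ·) (univ.val.map f).sort (univ.val.map f').sort := by
  set R := (univ.erase i).erase j
  have huniv : (univ : Finset V).val = i ::ₘ j ::ₘ R.val := by
    rw [erase_val, erase_val, Multiset.cons_erase, Multiset.cons_erase (mem_univ_val i)]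
    exact (Multiset.mem_erase_of_ne hij.symm).2 (mem_univ_val j)
  have hR : R.val.map f' = R.val.map f :=
    Multiset.map_congr rfl fun m hm => by
      obtain ⟨hmj, hm⟩ := mem_erase.1 hm
      exact hoff m (mem_erase.1 hm).1 hmj
  rw [huniv, Multiset.map_cons, Multiset.map_cons, Multiset.map_cons, Multiset.map_cons, hR]
  exact Multiset.lex_sort_cons_cons_of_lt hi hj hj' _

def redirect [DecidableEq V] (d : V → V → ℝ) (k i j : V) (ε : ℝ) : V → V → ℝ := fun x y =>
  d x y + (if x = k ∧ y = i then ε else 0) - (if x = k ∧ y = j then ε else 0)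

section Allocation

variable [Fintype V] [DecidableEq V] {G : SimpleGraph V} [DecidableRel G.Adj]
  {D : V → ℝ} {d : V → V → ℝ} {i j k : V} {ε : ℝ}

theorem IsAlloc.redirect (hd : IsAlloc G D d) (hki : G.Adj k i) (hkj : G.Adj k j) (hij : i ≠ j)
    (hε : 0 ≤ ε) (hεd : ε ≤ d k j) : IsAlloc G D (redirect d k i j ε) := by
  obtain ⟨hnn, hsupp, hsum⟩ := hd
  refine ⟨fun x y => ?_, fun x y hxy => ?_, fun x => ?_⟩
  · have := hnn x y
    unfold _root_.redirect
    split_ifs <;> grind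
  · have h₁ : ¬(x = k ∧ y = i) := by rintro ⟨rfl, rfl⟩; exact hxy hki
    have h₂ : ¬(x = k ∧ y = j) := by rintro ⟨rfl, rfl⟩; exact hxy hkj
    simp [_root_.redirect, h₁, h₂, hsupp x y hxy]
  · by_cases hxk : x = k
    · subst hxk
      simp [_root_.redirect, sum_add_distrib, sum_sub_distrib, hsum, hki, hkj]
    · simp [_root_.redirect, hsum, hxk]

theorem recv_redirect (hki : G.Adj k i) (hkj : G.Adj k j) (m : V) :
    recv G (redirect d k i j ε) m
      = recv G d m + (if m = i then ε else 0) - (if m = j then ε else 0) := by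
  simp only [recv, _root_.redirect, sum_add_distrib, sum_sub_distrib]
  congr 2
  · split_ifs with hmi
    · subst hmi; simp [hki.symm]
    · simp [hmi]
  · split_ifs with hmj
    · subst hmj; simp [hkj.symm]
    · simp [hmj]

theorem ratio_nonneg (hd : IsAlloc G D d) (hD : ∀ i, 0 ≤ D i) (i : V) : 0 ≤ ratio G D d i :=
  div_nonneg (sum_nonneg fun x _ => hd.1 x i) (hD i)

theorem LexOpt.eq_zero_of_ratio_lt (hopt : LexOpt G D d) (hD : ∀ i, 0 < D i) (hki : G.Adj k i)
    (hij : ratio G D d i < ratio G D d j) : d k j = 0 := by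
  by_contra hkj0
  have hkj : G.Adj k j := by_contra fun h => hkj0 (hopt.1.2.1 k j h)
  have hij' : i ≠ j := fun h => hij.ne (congrArg _ h)
  set ε := min (d k j) ((ratio G D d j - ratio G D d i) * D j / 2)
  have hgap : 0 < (ratio G D d j - ratio G D d i) * D j := mul_pos (sub_pos.2 hij) (hD j)
  have hε : 0 < ε := lt_min ((hopt.1.1 k j).lt_of_ne' hkj0) (half_pos hgap)
  have hεj : ε / D j < ratio G D d j - ratio G D d i := by
    rw [div_lt_iff₀ (hD j)]
    exact (min_le_right _ _).trans_lt (half_lt_self hgap)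
  have hratio : ∀ m, ratio G D (redirect d k i j ε) m
      = ratio G D d m + (if m = i then ε / D m else 0) - (if m = j then ε / D m else 0) := by
    intro m
    simp only [ratio, recv_redirect hki hkj]
    split_ifs <;> ring
  refine hopt.2 _ (hopt.1.redirect hki hkj hij' hε.le (min_le_left _ _)) ?_
  refine lex_sort_map_univ_of_lt hij' (fun m hmi hmj => by simp [hratio, hmi, hmj]) ?_ hij ?_
  · simpa [hratio, hij'] using div_pos hε (hD i)
  · simp only [hratio, if_neg hij'.symm, add_zero, if_true]
    linarith

theorem LexOpt.eq_of_ratio_lt_of_ratio_lt (hcomp : ∀ i j : V, i ≠ j → G.Adj i j)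
    (hopt : LexOpt G D d) (hD : ∀ i, 0 < D i) {a b : V} (ha : ratio G D d a < ratio G D d j)
    (hb : ratio G D d b < ratio G D d j) : a = b := by
  have hrecv : recv G d j ≠ 0 := by
    intro h
    have hj0 : ratio G D d j = 0 := by simp [ratio, h]
    linarith [ratio_nonneg hopt.1 (fun i => (hD i).le) a]
  obtain ⟨k, -, hk⟩ := exists_ne_zero_of_sum_ne_zero hrecv
  have hdonor : ∀ i, ratio G D d i < ratio G D d j → k = i := fun i hi =>
    by_contra fun hki => hk (hopt.eq_zero_of_ratio_lt hD (hcomp k i hki) hi)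
  exact (hdonor a ha).symm.trans (hdonor b hb)

end Allocation

theorem stmt19_general [Fintype V] [Nonempty V] [DecidableEq V] (G : SimpleGraph V) [DecidableRel G.Adj]
    (hcomp : ∀ i j : V, i ≠ j → G.Adj i j)
    (D : V → ℝ) (hD : ∀ i, 0 < D i) (d : V → V → ℝ) (hopt : LexOpt G D d) :
    (Finset.univ.image (ratio G D d)).card ≤ 2 ∧
    ((Finset.univ.image (ratio G D d)).card = 2 → (minSet G D d).card = 1) := by
  set ρ := ratio G D d
  have hlevel : ∀ {a b j}, ρ a < ρ j → ρ b < ρ j → a = b :=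
    hopt.eq_of_ratio_lt_of_ratio_lt hcomp hD
  constructor
  · obtain ⟨j, -, hj⟩ := exists_max_image univ ρ univ_nonempty
    have hbelow : ((univ.image ρ).erase (ρ j)).card ≤ 1 := by
      refine card_le_one.2 fun x hx y hy => ?_
      obtain ⟨hxj, hx⟩ := mem_erase.1 hx
      obtain ⟨hyj, hy⟩ := mem_erase.1 hy
      obtain ⟨a, -, rfl⟩ := mem_image.1 hx
      obtain ⟨b, -, rfl⟩ := mem_image.1 hy
      rw [hlevel ((hj a (mem_univ a)).lt_of_ne hxj) ((hj b (mem_univ b)).lt_of_ne hyj)]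
    have := card_erase_add_one (mem_image_of_mem ρ (mem_univ j))
    omega
  · intro htwo
    obtain ⟨j, hj⟩ : ∃ j, minRatio G D d < ρ j := by
      by_contra! hmin
      have hsub : univ.image ρ ⊆ {minRatio G D d} := fun x hx => by
        obtain ⟨a, -, rfl⟩ := mem_image.1 hx
        exact mem_singleton.2 ((hmin a).antisymm (inf'_le _ (mem_univ a)))
      have := card_le_card hsub
      rw [card_singleton] at this
      omega
    obtain ⟨i₀, -, hi₀⟩ := exists_mem_eq_inf' univ_nonempty ρ
    refine le_antisymm (card_le_one.2 fun a ha b hb => ?_) ?_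
    · exact hlevel ((mem_filter.1 ha).2.trans_lt hj) ((mem_filter.1 hb).2.trans_lt hj)
    · exact card_pos.2 ⟨i₀, mem_filter.2 ⟨mem_univ i₀, hi₀.symm⟩⟩

theorem stmt19 [Fintype V] [Nonempty V] [DecidableEq V] (G : SimpleGraph V) [DecidableRel G.Adj]
    (hcard : 1 < Fintype.card V) (hcomp : ∀ i j : V, i ≠ j → G.Adj i j)
    (D : V → ℝ) (hD : ∀ i, 0 < D i) (d : V → V → ℝ) (hopt : LexOpt G D d) :
    (Finset.univ.image (ratio G D d)).card ≤ 2 ∧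
    ((Finset.univ.image (ratio G D d)).card = 2 → (minSet G D d).card = 1) :=
  stmt19_general G hcomp D hD d hopt
end
end
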